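/- Let f be the density f(x) = (1/σ̃)·φ(x/σ̃)·√(2π(1-ρ²))·ψ(-ρx/(√(1-ρ²)·σ̃)) with |ρ| < 1 and σ̃ > 0. Then ∫ x·f(x) dx = -√(π/2)·ρ·σ̃. -/

import Mathlib

open Real MeasureTheory

noncomputable def stdPhi (x : ℝ) : ℝ := (Real.sqrt (2 * Real.pi))⁻¹ * Real.exp (-x ^ 2 / 2)

noncomputable def stdCDF (x : ℝ) : ℝ := ∫ y in Set.Iic x, stdPhi y

noncomputable def psi (x : ℝ) : ℝ := stdPhi x + x * stdCDF x

noncomputable def peakDensity (ρ σ : ℝ) (x : ℝ) : ℝ :=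
  σ⁻¹ * stdPhi (x / σ) * Real.sqrt (2 * Real.pi * (1 - ρ ^ 2)) *
    psi (-ρ * x / (Real.sqrt (1 - ρ ^ 2) * σ))

/-! Writing `σ⁻¹ φ(x/σ)` as the density of `X ~ N(0, σ²)` and `a = -ρ / (√(1-ρ²) σ)`, the mean is
`√(2π(1-ρ²)) · E[X ψ(aX)]`, and `X ψ(aX) = X φ(aX) + a X² Φ(aX)`. The first term is odd in `X`, so
it has mean zero. Since `Φ(t) + Φ(-t) = 1` and `X` is symmetric, `E[X² Φ(aX)] = E[X²] / 2 = σ² / 2`.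
Hence the mean is `√(2π(1-ρ²)) · a σ² / 2 = -√(π/2) ρ σ`. -/

open ProbabilityTheory
open scoped NNReal

section NegInvariant

variable {G E : Type*} [MeasurableSpace G] [AddGroup G] [MeasurableNeg G]
  [NormedAddCommGroup E] [NormedSpace ℝ E] {μ : Measure G} [μ.IsNegInvariant]

theorem integral_eq_zero_of_odd {f : G → E} (hf : ∀ x, f (-x) = -f x) : ∫ x, f x ∂μ = 0 := by
  have : IsAddTorsionFree E := .of_isTorsionFree ℝ E
  simp_rw [← self_eq_neg, ← integral_neg, ← hf, integral_neg_eq_self]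

theorem integral_mul_eq_half_of_even_of_add_neg_eq_one {f k : G → ℝ}
    (hf : ∀ x, f (-x) = f x) (hk : ∀ x, k x + k (-x) = 1)
    (hf_int : Integrable f μ) (hfk_int : Integrable (fun x ↦ f x * k x) μ) :
    ∫ x, f x * k x ∂μ = (∫ x, f x ∂μ) / 2 := by
  have hreflect : ∫ x, f x * k x ∂μ = ∫ x, (f x - f x * k x) ∂μ := by
    rw [← integral_neg_eq_self]
    congr 1 with x
    rw [hf, eq_sub_of_add_eq' (hk x)]
    ring
  rw [integral_sub hf_int hfk_int] at hreflect
  linarith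

end NegInvariant

instance isNegInvariant_gaussianReal_zero (v : ℝ≥0) : (gaussianReal 0 v).IsNegInvariant :=
  ⟨by simpa [Measure.neg_def] using gaussianReal_map_neg (μ := 0) (v := v)⟩

theorem integral_sq_gaussianReal_zero (v : ℝ≥0) : ∫ x, x ^ 2 ∂gaussianReal 0 v = v := by
  rw [← variance_of_integral_eq_zero aemeasurable_id' integral_id_gaussianReal,
    variance_fun_id_gaussianReal]

theorem stdPhi_eq_gaussianPDFReal (x : ℝ) : stdPhi x = gaussianPDFReal 0 1 x := by
  simp [stdPhi, gaussianPDFReal]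

theorem inv_mul_stdPhi_div {σ : ℝ} (hσ : 0 < σ) (x : ℝ) :
    σ⁻¹ * stdPhi (x / σ) = gaussianPDFReal 0 ⟨σ ^ 2, sq_nonneg σ⟩ x := by
  rw [stdPhi_eq_gaussianPDFReal, div_eq_inv_mul, gaussianPDFReal_inv_mul hσ.ne']
  rw [abs_of_pos hσ, mul_zero, mul_one, inv_mul_cancel_left₀ hσ.ne']
  rfl

@[fun_prop]
theorem continuous_stdPhi : Continuous stdPhi := by unfold stdPhi; fun_prop

theorem stdPhi_neg (x : ℝ) : stdPhi (-x) = stdPhi x := by simp [stdPhi]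

theorem stdPhi_le (x : ℝ) : stdPhi x ≤ (√(2 * π))⁻¹ := by
  unfold stdPhi
  exact mul_le_of_le_one_right (by positivity) (Real.exp_le_one_iff.2 (by nlinarith [sq_nonneg x]))

theorem stdCDF_eq_measureReal (x : ℝ) : stdCDF x = (gaussianReal 0 1).real (Set.Iic x) := by
  rw [measureReal_def, gaussianReal_apply_eq_integral 0 one_ne_zero,
    ENNReal.toReal_ofReal (integral_nonneg fun _ ↦ gaussianPDFReal_nonneg _ _ _)]
  simp only [stdCDF, stdPhi_eq_gaussianPDFReal]

theorem stdCDF_mem_Icc (x : ℝ) : stdCDF x ∈ Set.Icc 0 1 := by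
  rw [stdCDF_eq_measureReal]
  exact ⟨measureReal_nonneg, measureReal_le_one⟩

theorem measurable_stdCDF : Measurable stdCDF := by
  refine Monotone.measurable fun x y hxy ↦ ?_
  simp only [stdCDF_eq_measureReal]
  exact measureReal_mono (Set.Iic_subset_Iic.2 hxy)

theorem stdCDF_add_stdCDF_neg (x : ℝ) : stdCDF x + stdCDF (-x) = 1 := by
  have : NullSingletonClass (gaussianReal 0 1) := nullSingletonClass_gaussianReal one_ne_zero
  have hreflect :
      (gaussianReal 0 1).real (Set.Iic (-x)) = (gaussianReal 0 1).real (Set.Iic x)ᶜ := by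
    rw [Set.compl_Iic, measureReal_congr Ioi_ae_eq_Ici, ← neg_neg x, ← Set.neg_Iic, neg_neg,
      measureReal_def, measureReal_def, Measure.measure_neg]
  rw [stdCDF_eq_measureReal, stdCDF_eq_measureReal, hreflect,
    measureReal_add_measureReal_compl measurableSet_Iic, probReal_univ]

theorem integral_mul_psi_const_mul_gaussianReal (a : ℝ) (v : ℝ≥0) :
    ∫ x, x * psi (a * x) ∂gaussianReal 0 v = a * v / 2 := by
  have hid : Integrable (fun x ↦ x) (gaussianReal 0 v) :=
    memLp_one_iff_integrable.1 (memLp_id_gaussianReal 1)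
  have hsq : Integrable (fun x ↦ x ^ 2) (gaussianReal 0 v) :=
    (memLp_id_gaussianReal 2).integrable_sq
  have hphi : Integrable (fun x ↦ x * stdPhi (a * x)) (gaussianReal 0 v) :=
    hid.mul_bdd (by fun_prop) (ae_of_all _ fun x ↦ by
      rw [Real.norm_of_nonneg (by unfold stdPhi; positivity)]; exact stdPhi_le _)
  have hcdf : Integrable (fun x ↦ x ^ 2 * stdCDF (a * x)) (gaussianReal 0 v) :=
    hsq.mul_bdd (measurable_stdCDF.comp (measurable_const_mul a)).aestronglyMeasurable
      (ae_of_all _ fun x ↦ by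
        rw [Real.norm_of_nonneg (stdCDF_mem_Icc _).1]; exact (stdCDF_mem_Icc _).2)
  have hodd : ∫ x, x * stdPhi (a * x) ∂gaussianReal 0 v = 0 :=
    integral_eq_zero_of_odd fun x ↦ by rw [mul_neg, stdPhi_neg]; ring
  have hhalf : ∫ x, x ^ 2 * stdCDF (a * x) ∂gaussianReal 0 v = v / 2 := by
    rw [integral_mul_eq_half_of_even_of_add_neg_eq_one (fun x ↦ by ring)
      (fun x ↦ by rw [mul_neg, stdCDF_add_stdCDF_neg]) hsq hcdf, integral_sq_gaussianReal_zero]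
  calc ∫ x, x * psi (a * x) ∂gaussianReal 0 v
      = ∫ x, (x * stdPhi (a * x) + a * (x ^ 2 * stdCDF (a * x))) ∂gaussianReal 0 v := by
        congr 1 with x; unfold psi; ring
    _ = a * v / 2 := by
        rw [integral_add hphi (hcdf.const_mul a), integral_const_mul, hodd, hhalf]; ring

theorem peakDensity_mean (ρ σ : ℝ) (hρ : |ρ| < 1) (hσ : 0 < σ) :
    (∫ x, x * peakDensity ρ σ x) = -Real.sqrt (Real.pi / 2) * ρ * σ := by
  have hρ2 : 0 < 1 - ρ ^ 2 := by nlinarith [abs_lt.1 hρ]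
  have hs : √(1 - ρ ^ 2) ≠ 0 := (Real.sqrt_pos.2 hρ2).ne'
  set a := -ρ / (√(1 - ρ ^ 2) * σ)
  set v : ℝ≥0 := ⟨σ ^ 2, sq_nonneg σ⟩
  have hv : v ≠ 0 := by rw [ne_eq, ← NNReal.coe_eq_zero]; exact pow_ne_zero 2 hσ.ne'
  have hdens : ∀ x, x * peakDensity ρ σ x =
      gaussianPDFReal 0 v x • (√(2 * π * (1 - ρ ^ 2)) * (x * psi (a * x))) := fun x ↦ by
    have harg : -ρ * x / (√(1 - ρ ^ 2) * σ) = a * x := by ring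
    rw [peakDensity, harg, inv_mul_stdPhi_div hσ, smul_eq_mul]
    ring
  simp_rw [hdens, ← integral_gaussianReal_eq_integral_smul hv, integral_const_mul,
    integral_mul_psi_const_mul_gaussianReal]
  have hsqrt : √(2 * π * (1 - ρ ^ 2)) = 2 * √(π / 2) * √(1 - ρ ^ 2) := by
    rw [show 2 * π * (1 - ρ ^ 2) = 2 ^ 2 * (π / 2) * (1 - ρ ^ 2) by ring,
      Real.sqrt_mul' _ hρ2.le, Real.sqrt_mul' _ (by positivity),
      Real.sqrt_sq zero_le_two]
  rw [show (v : ℝ) = σ ^ 2 from rfl, hsqrt]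
  simp only [a]
  field_simp
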